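/- arXiv:1303.1943 — 2 statements merged into one kernel-verified Lean document; each statement's English description precedes it below -/
import Mathlib

section
/- For every continuously differentiable function φ : ℝ → ℝ with compact support and every a ∈ ℝ, lim_{R→∞} ∫_{-∞}^{∞} (1/π) · sin(R(x-a))/(x-a) · φ(x) dx = φ(a). -/
/-!
After translating `a` to the origin, split `φ = ψ + h` with `ψ t = exp (-π t²) φ 0`, so that
`h 0 = 0`. The Fourier transform of the indicator of `(-W, W]` is `sin (2πWt) / (πt)`, so the
multiplication formula `∫ 𝓕χ • ψ = ∫ χ • 𝓕ψ` turns `∫ sin (Rt) / t • ψ t` into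
`π ∫_{-R/2π}^{R/2π} 𝓕ψ`, which tends to `π ψ 0` by Fourier inversion because the Gaussian is its
own Fourier transform. Since `h` vanishes and is differentiable at `0`, `h t / t` is integrable,
and `∫ sin (Rt) • (h t / t) → 0` by the Riemann–Lebesgue lemma.
-/

open MeasureTheory Filter Real FourierTransform Topology

section

variable {E : Type*} [NormedAddCommGroup E] [NormedSpace ℂ E]

lemma abs_sin_mul_div_le (R t : ℝ) : |sin (R * t) / t| ≤ |R| := by
  rcases eq_or_ne t 0 with rfl | ht
  · simp
  rw [abs_div, div_le_iff₀ (abs_pos.2 ht), ← abs_mul]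
  exact abs_sin_le_abs

lemma integrable_sin_mul_div_smul {f : ℝ → E} (hf : Integrable f) (R : ℝ) :
    Integrable (fun t => (sin (R * t) / t) • f t) :=
  hf.bdd_smul (𝕜 := ℝ) |R| (by fun_prop : Measurable fun t => sin (R * t) / t).aestronglyMeasurable
    (ae_of_all _ fun t => abs_sin_mul_div_le R t)

lemma integrable_inv_smul_of_differentiableAt {F : Type*} [NormedAddCommGroup F]
    [NormedSpace ℝ F] {h : ℝ → F} (hh : Integrable h) (hd : DifferentiableAt ℝ h 0)
    (h0 : h 0 = 0) : Integrable (fun t => t⁻¹ • h t) := by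
  obtain ⟨C, hC, hCh⟩ := hd.isBigO_sub.exists_pos
  obtain ⟨ε, hε, hball⟩ := Metric.eventually_nhds_iff.1 hCh.bound
  have hdom : Integrable (fun t => (Metric.ball 0 ε).indicator (fun _ => C) t + ε⁻¹ * ‖h t‖) :=
    ((integrableOn_const measure_ball_lt_top.ne).integrable_indicator measurableSet_ball).add
      (hh.norm.const_mul ε⁻¹)
  refine hdom.mono' (measurable_inv.aestronglyMeasurable.smul hh.aestronglyMeasurable)
    (ae_of_all _ fun t => ?_)
  rw [norm_smul, norm_inv]
  by_cases ht : t ∈ Metric.ball 0 ε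
  · have hCt : ‖h t‖ ≤ C * ‖t‖ := by simpa [h0] using hball ht
    have hnear : ‖t‖⁻¹ * ‖h t‖ ≤ C := by
      rcases eq_or_ne t 0 with rfl | ht0
      · simpa using hC.le
      · rw [inv_mul_le_iff₀ (norm_pos_iff.2 ht0)]
        linarith
    rw [Set.indicator_of_mem ht]
    linarith [show 0 ≤ ε⁻¹ * ‖h t‖ by positivity]
  · have hεt : ε ≤ ‖t‖ := by simpa using ht
    rw [Set.indicator_of_notMem ht, zero_add]
    gcongr

lemma ofReal_sin_eq_exp_sub_exp (x : ℝ) :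
    (sin x : ℂ) =
      (2 * Complex.I)⁻¹ * (Complex.exp (x * Complex.I) - Complex.exp (↑(-x) * Complex.I)) := by
  rw [Complex.ofReal_sin, Complex.sin, Complex.ofReal_neg, neg_mul]
  field_simp
  ring_nf
  rw [Complex.I_sq]
  ring

lemma tendsto_integral_sin_mul_smul {g : ℝ → E} (hg : Integrable g) :
    Tendsto (fun R => ∫ t, sin (R * t) • g t) atTop (𝓝 0) := by
  have h2π : (0 : ℝ) < 2 * π := by positivity
  have hexp : ∀ w : ℝ,
      Integrable (fun t => Complex.exp (↑(-2 * π * t * w) * Complex.I) • g t) := fun w =>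
    hg.bdd_smul (𝕜 := ℂ) 1 (by fun_prop)
      (ae_of_all _ fun t => (Complex.norm_exp_ofReal_mul_I _).le)
  have hsin : ∀ R, ∫ t, sin (R * t) • g t
      = (2 * Complex.I)⁻¹ • (𝓕 g (-(R / (2 * π))) - 𝓕 g (R / (2 * π))) := by
    intro R
    simp_rw [Real.fourier_real_eq_integral_exp_smul]
    rw [← integral_sub (hexp _) (hexp _), ← integral_smul]
    congr 1 with t
    have e₁ : -2 * π * t * -(R / (2 * π)) = R * t := by field_simp
    have e₂ : -2 * π * t * (R / (2 * π)) = -(R * t) := by field_simp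
    rw [← sub_smul, smul_smul, ← Complex.coe_smul, ofReal_sin_eq_exp_sub_exp, e₁, e₂]
  have hW : Tendsto (fun R : ℝ => R / (2 * π)) atTop atTop := tendsto_id.atTop_div_const h2π
  have hF := Real.zero_at_infty_fourier g
  have hlim := ((hF.comp ((tendsto_neg_atTop_atBot.comp hW).mono_right atBot_le_cocompact)).sub
    (hF.comp (hW.mono_right atTop_le_cocompact))).const_smul (2 * Complex.I)⁻¹
  simpa [hsin] using hlim

lemma fourier_indicator_Ioc {W ξ : ℝ} (hW : 0 ≤ W) (hξ : ξ ≠ 0) :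
    𝓕 ((Set.Ioc (-W) W).indicator 1 : ℝ → ℂ) ξ = ((sin (2 * π * W * ξ) / (π * ξ) : ℝ) : ℂ) := by
  have hind : ∀ v : ℝ,
      Complex.exp (↑(-2 * π * v * ξ) * Complex.I) • (Set.Ioc (-W) W).indicator (1 : ℝ → ℂ) v =
        (Set.Ioc (-W) W).indicator (fun v : ℝ => Complex.exp (↑(-2 * π * ξ * v) * Complex.I)) v := by
    intro v
    by_cases hv : v ∈ Set.Ioc (-W) W <;> simp [hv, mul_right_comm]
  have hc : -2 * π * ξ ≠ 0 := by simp [hξ, pi_ne_zero]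
  rw [Real.fourier_real_eq_integral_exp_smul]
  simp_rw [hind]
  rw [integral_indicator measurableSet_Ioc, ← intervalIntegral.integral_of_le (by linarith),
    intervalIntegral.integral_comp_mul_left (fun u : ℝ => Complex.exp (u * Complex.I)) hc,
    mul_neg, integral_exp_mul_I_eq_sin, Complex.real_smul,
    show -2 * π * ξ * W = -(2 * π * W * ξ) by ring, Real.sin_neg]
  push_cast
  field_simp

variable [CompleteSpace E]

lemma fourier_smul_const {V : Type*} [NormedAddCommGroup V] [InnerProductSpace ℝ V]
    [FiniteDimensional ℝ V] [MeasurableSpace V] [BorelSpace V] (f : V → ℂ) (c : E) :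
    𝓕 (fun v => f v • c) = fun w => 𝓕 f w • c := by
  ext w
  simp only [Real.fourier_eq, ← smul_assoc, integral_smul_const]

lemma fourier_gaussian_pi_one :
    𝓕 (fun x : ℝ => Complex.exp (-π * x ^ 2)) = fun x : ℝ => Complex.exp (-π * x ^ 2) := by
  simpa using fourier_gaussian_pi (b := 1) (by simp)

lemma integral_fourier_smul_eq_integral_smul_fourier {f : ℝ → ℂ} {g : ℝ → E}
    (hf : Integrable f) (hg : Integrable g) : ∫ ξ, 𝓕 f ξ • g ξ = ∫ x, f x • 𝓕 g x := by
  refine (VectorFourier.integral_fourierIntegral_smul_eq_flip (L := innerₗ ℝ)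
    Real.continuous_fourierChar (by fun_prop) hf hg).trans ?_
  congr! 3 with x
  simp [Real.fourier_eq, VectorFourier.fourierIntegral]

lemma integral_sin_mul_div_smul_eq_integral_fourier {ψ : ℝ → E} (hψ : Integrable ψ) {W : ℝ}
    (hW : 0 ≤ W) : ∫ t, (sin (2 * π * W * t) / t) • ψ t = π • ∫ ξ in -W..W, 𝓕 ψ ξ := by
  set χ : ℝ → ℂ := (Set.Ioc (-W) W).indicator 1
  have hχ : Integrable χ :=
    (integrable_indicator_iff measurableSet_Ioc).2 (integrableOn_const (by simp))
  have hker : ∀ᵐ t : ℝ, (sin (2 * π * W * t) / t) • ψ t = (π : ℂ) • (𝓕 χ t • ψ t) := by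
    filter_upwards [Measure.ae_ne volume 0] with t ht
    rw [fourier_indicator_Ioc hW ht, smul_smul, ← Complex.ofReal_mul, Complex.coe_smul]
    congr 1
    field_simp
  calc ∫ t, (sin (2 * π * W * t) / t) • ψ t = (π : ℂ) • ∫ t, 𝓕 χ t • ψ t := by
        rw [integral_congr_ae hker, integral_smul]
    _ = (π : ℂ) • ∫ x, χ x • 𝓕 ψ x := by
        rw [integral_fourier_smul_eq_integral_smul_fourier hχ hψ]
    _ = π • ∫ ξ in -W..W, 𝓕 ψ ξ := by
        rw [Complex.coe_smul, intervalIntegral.integral_of_le (by linarith),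
          ← integral_indicator measurableSet_Ioc]
        congr 2 with x
        by_cases hx : x ∈ Set.Ioc (-W) W <;> simp [χ, hx]

lemma tendsto_integral_sin_mul_div_smul_of_integrable_fourier {ψ : ℝ → E}
    (hψ : Integrable ψ) (hFψ : Integrable (𝓕 ψ)) (hψ0 : ContinuousAt ψ 0) :
    Tendsto (fun R => ∫ t, (sin (R * t) / t) • ψ t) atTop (𝓝 (π • ψ 0)) := by
  have h2π : (0 : ℝ) < 2 * π := by positivity
  have hinv : ∫ ξ, 𝓕 ψ ξ = ψ 0 := by
    simpa [fourierInv_eq] using hψ.fourierInv_fourier_eq hFψ hψ0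
  have hW : Tendsto (fun R : ℝ => R / (2 * π)) atTop atTop := tendsto_id.atTop_div_const h2π
  have hlim := (hinv ▸ intervalIntegral_tendsto_integral hFψ
    (tendsto_neg_atTop_atBot.comp hW) hW).const_smul π
  refine hlim.congr' ?_
  filter_upwards [eventually_ge_atTop 0] with R hR
  dsimp only [Function.comp_apply]
  rw [← integral_sin_mul_div_smul_eq_integral_fourier hψ (div_nonneg hR h2π.le),
    mul_div_cancel₀ R h2π.ne']

theorem tendsto_integral_sin_mul_div_smul {φ : ℝ → E} (hφ : Integrable φ)
    (hd : DifferentiableAt ℝ φ 0) :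
    Tendsto (fun R => ∫ t, (sin (R * t) / t) • φ t) atTop (𝓝 (π • φ 0)) := by
  set ψ : ℝ → E := fun t => Complex.exp (-π * t ^ 2) • φ 0
  have hψ : Integrable ψ := by
    refine Integrable.smul_const ?_ _
    simpa using integrable_cexp_neg_mul_sq (b := π) (by simp [pi_pos])
  have hFψ : 𝓕 ψ = ψ := by simp only [ψ, fourier_smul_const, fourier_gaussian_pi_one]
  set h : ℝ → E := fun t => φ t - ψ t
  have hh : Integrable h := hφ.sub hψ
  have hh0 : h 0 = 0 := by simp [h, ψ]
  have hhd : DifferentiableAt ℝ h 0 := hd.sub (by fun_prop)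
  have hsplit : ∀ R, ∫ t, (sin (R * t) / t) • φ t
      = (∫ t, (sin (R * t) / t) • ψ t) + ∫ t, sin (R * t) • (t⁻¹ • h t) := by
    intro R
    rw [← integral_add (integrable_sin_mul_div_smul hψ R)]
    · congr 1 with t
      rw [smul_smul, ← div_eq_mul_inv, ← smul_add, add_sub_cancel]
    · simpa only [smul_smul, ← div_eq_mul_inv] using integrable_sin_mul_div_smul hh R
  have hlim := (tendsto_integral_sin_mul_div_smul_of_integrable_fourier hψ (by rwa [hFψ])
    (by fun_prop)).add
    (tendsto_integral_sin_mul_smul (integrable_inv_smul_of_differentiableAt hh hhd hh0))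
  simpa [hsplit, ψ] using hlim

end

theorem tendsto_integral_sin_mul_div_mul {φ : ℝ → ℝ} (hφ : Integrable φ)
    (hd : DifferentiableAt ℝ φ 0) :
    Tendsto (fun R => ∫ t, sin (R * t) / t * φ t) atTop (𝓝 (π * φ 0)) := by
  rw [← tendsto_ofReal_iff]
  convert tendsto_integral_sin_mul_div_smul hφ.ofReal
    (Complex.ofRealCLM.differentiableAt.comp 0 hd) using 2 with R
  · rw [← integral_complex_ofReal]
    congr 1 with t
    simp
  · simp

/-- Dirichlet-kernel delta-sequence property for compactly supported C¹ functions. -/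
theorem dirichlet_kernel_delta
    (φ : ℝ → ℝ) (hφ : ContDiff ℝ 1 φ) (hsupp : HasCompactSupport φ) (a : ℝ) :
    Tendsto (fun R : ℝ =>
        ∫ x : ℝ, (1 / π) * (Real.sin (R * (x - a)) / (x - a)) * φ x)
      atTop (nhds (φ a)) := by
  have hint : Integrable (fun t => φ (t + a)) :=
    (hφ.continuous.integrable_of_hasCompactSupport hsupp).comp_add_right a
  have hd : DifferentiableAt ℝ (fun t => φ (t + a)) 0 :=
    (hφ.differentiable one_ne_zero _).comp 0 (by fun_prop)
  have hlim := (tendsto_integral_sin_mul_div_mul hint hd).const_mul π⁻¹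
  rw [zero_add, inv_mul_cancel_left₀ pi_ne_zero] at hlim
  refine hlim.congr fun R => ?_
  rw [← integral_const_mul, ← integral_sub_right_eq_self _ a]
  congr 1 with x
  rw [sub_add_cancel]
  ring
end

section
/- Let U(a,z) be the parabolic cylinder function defined for Re a > -1/2 by U(a,z) = (e^{-z²/4}/Γ(1/2 + a)) ∫_0^∞ e^{-zs - s²/2} s^{a - 1/2} ds. Then for all real a and x > 0, |U(ia, x e^{-iπ/4})| ≤ 2^{1/4} √π / (|Γ(1/2 + ia)| · x^{1/2}). -/
open MeasureTheory Real Complex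

/-- Weber's parabolic cylinder function U(a,z), via its integral
representation (valid for Re a > -1/2). -/
noncomputable def paraCylU (a z : ℂ) : ℂ :=
  Complex.exp (-z ^ 2 / 4) / Complex.Gamma (1/2 + a) *
    ∫ s in Set.Ioi (0 : ℝ), Complex.exp (-z * s - s ^ 2 / 2) * (s : ℂ) ^ (a - 1/2)

open Set

/-!
For `Re z > 0` the Gaussian factor `exp (-s²/2)` in the integrand has modulus at most one, so
`‖∫₀^∞ exp (-z s - s²/2) s^(a-1/2) ds‖ ≤ ∫₀^∞ s^(Re a - 1/2) exp (-(Re z) s) ds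
  = Γ(Re a + 1/2) / (Re z)^(Re a + 1/2)`.
On the ray `z = x e^{-iπ/4}` we have `z² = -i x²`, so `‖exp (-z²/4)‖ = 1`, and `Re z = x / √2`;
for `a = i b` this gives `√π (√2 / x)^(1/2) = 2^(1/4) √π / √x`.
-/

theorem norm_integral_exp_mul_cpow_le {a z : ℂ} (ha : -1 / 2 < a.re) (hz : 0 < z.re) :
    ‖∫ s in Ioi (0 : ℝ), Complex.exp (-z * s - s ^ 2 / 2) * (s : ℂ) ^ (a - 1 / 2)‖ ≤
      (1 / z.re) ^ (a.re + 1 / 2) * Real.Gamma (a.re + 1 / 2) := by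
  have hpos : 0 < a.re + 1 / 2 := by linarith
  rw [← Real.integral_rpow_mul_exp_neg_mul_Ioi hpos hz]
  have hint : IntegrableOn (fun s : ℝ ↦ s ^ (a.re + 1 / 2 - 1) * Real.exp (-(z.re * s))) (Ioi 0) :=
    .of_integral_ne_zero (by rw [Real.integral_rpow_mul_exp_neg_mul_Ioi hpos hz]; positivity)
  refine norm_integral_le_of_norm_le hint ?_
  filter_upwards [ae_restrict_mem measurableSet_Ioi] with s (hs : 0 < s)
  have hre : (-z * s - (s : ℂ) ^ 2 / 2).re = -(z.re * s) - s ^ 2 / 2 := by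
    simp [← Complex.ofReal_pow]
  have hexp : (-z * s - (s : ℂ) ^ 2 / 2).re ≤ -(z.re * s) := by
    rw [hre]; nlinarith [sq_nonneg s]
  rw [norm_mul, Complex.norm_exp, Complex.norm_cpow_eq_rpow_re_of_pos hs, mul_comm,
    show (a - 1 / 2).re = a.re + 1 / 2 - 1 by simp; ring]
  gcongr

theorem norm_paraCylU_le {a z : ℂ} (ha : -1 / 2 < a.re) (hz : 0 < z.re) :
    ‖paraCylU a z‖ ≤ ‖Complex.exp (-z ^ 2 / 4)‖ *
      ((1 / z.re) ^ (a.re + 1 / 2) * Real.Gamma (a.re + 1 / 2)) / ‖Complex.Gamma (1 / 2 + a)‖ := by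
  rw [paraCylU, norm_mul, norm_div, div_mul_eq_mul_div]
  gcongr
  exact norm_integral_exp_mul_cpow_le ha hz

theorem exp_neg_I_mul_pi_div_four_eq :
    Complex.exp (-Complex.I * π / 4) = (Real.sqrt 2 / 2 : ℝ) * (1 - Complex.I) := by
  rw [show -Complex.I * π / 4 = ((-(π / 4) : ℝ) : ℂ) * Complex.I by push_cast; ring,
    Complex.exp_mul_I, ← Complex.ofReal_cos, ← Complex.ofReal_sin, Real.cos_neg, Real.sin_neg,
    Real.cos_pi_div_four, Real.sin_pi_div_four]
  push_cast; ring

theorem sq_ofReal_mul_exp_neg_I_mul_pi_div_four (x : ℝ) :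
    ((x : ℂ) * Complex.exp (-Complex.I * π / 4)) ^ 2 = -Complex.I * (x ^ 2 : ℝ) := by
  have h2 : ((Real.sqrt 2 : ℝ) : ℂ) ^ 2 = 2 := by
    rw [← Complex.ofReal_pow, Real.sq_sqrt zero_le_two]; norm_num
  rw [exp_neg_I_mul_pi_div_four_eq]
  push_cast
  linear_combination (x : ℂ) ^ 2 * (1 - Complex.I) ^ 2 / 4 * h2 + (x : ℂ) ^ 2 / 2 * Complex.I_sq

theorem re_ofReal_mul_exp_neg_I_mul_pi_div_four (x : ℝ) :
    ((x : ℂ) * Complex.exp (-Complex.I * π / 4)).re = x / Real.sqrt 2 := by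
  rw [exp_neg_I_mul_pi_div_four_eq, ← mul_assoc, ← Complex.ofReal_mul, Complex.re_ofReal_mul]
  simp only [sub_re, one_re, I_re, sub_zero, mul_one]
  field_simp
  rw [Real.sq_sqrt zero_le_two]

theorem sqrt_two_div_rpow_one_half {x : ℝ} (hx : 0 ≤ x) :
    (Real.sqrt 2 / x) ^ (1 / 2 : ℝ) = (2 : ℝ) ^ (1 / 4 : ℝ) / Real.sqrt x := by
  rw [Real.div_rpow (Real.sqrt_nonneg 2) hx, Real.sqrt_eq_rpow, Real.sqrt_eq_rpow,
    ← Real.rpow_mul zero_le_two]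
  norm_num

/-- The bound |U(ia, x e^{-iπ/4})| ≤ 2^{1/4} √π / (|Γ(1/2+ia)| x^{1/2}). -/
theorem paraCylU_bound (a : ℝ) (x : ℝ) (hx : 0 < x) :
    ‖paraCylU (Complex.I * a) (x * Complex.exp (-Complex.I * π / 4))‖ ≤
      (2 : ℝ) ^ ((1:ℝ)/4) * Real.sqrt π /
        (‖Complex.Gamma (1/2 + Complex.I * a)‖ * Real.sqrt x) := by
  have hre : (Complex.I * a).re = 0 := by simp
  have hzre := re_ofReal_mul_exp_neg_I_mul_pi_div_four x
  have hz : 0 < ((x : ℂ) * Complex.exp (-Complex.I * π / 4)).re := by rw [hzre]; positivity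
  have hgauss : ‖Complex.exp (-((x : ℂ) * Complex.exp (-Complex.I * π / 4)) ^ 2 / 4)‖ = 1 := by
    rw [sq_ofReal_mul_exp_neg_I_mul_pi_div_four, Complex.norm_exp]
    simp [-Complex.ofReal_pow]
  refine (norm_paraCylU_le (by rw [hre]; norm_num) hz).trans_eq ?_
  rw [hgauss, hre, hzre, one_div_div, zero_add, sqrt_two_div_rpow_one_half hx.le,
    Real.Gamma_one_half_eq]
  ring
end
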